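/- arXiv:0805.0828 — 3 statements merged into one kernel-verified Lean document; each statement's English description precedes it below -/
import Mathlib

section
/- Consider the left invariant system Ẋ = Xu on G and a second system X̂̇ = F(X̂, u, t) driven by the same admissible input, where F : G × 𝔤 × ℝ → TG satisfies F(X̂, u, t) ∈ T_{X̂}G, and assume solutions of the second system exist through every initial condition for every admissible input. Then the two systems are left synchronous (i.e., the canonical left invariant error E_l(t) = X(t)⁻¹X̂(t) is constant along every pair of solutions, for every admissible input) if and only if along every pair of solutions F(X̂(t), u(t), t) = X̂(t) Ad_{X̂(t)⁻¹X(t)} u(t) = T_e L_{X̂(t)} Ad_{E_l(t)⁻¹} u(t) for all t. -/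
open scoped Manifold
open Filter Topology

/-- `TransL I a b` is the tangent map `T_b L_a` of left translation `L_a : g ↦ a * g`
at the point `b`, with all tangent spaces of the Lie group canonically identified
with the model space `E`. -/
noncomputable def TransL {E : Type*} [NormedAddCommGroup E] [NormedSpace ℝ E]
    {H : Type*} [TopologicalSpace H] (I : ModelWithCorners ℝ E H)
    {G : Type*} [TopologicalSpace G] [ChartedSpace H G] [Group G]
    (a b : G) : E →L[ℝ] E :=
  mfderiv I I (fun g => a * g) b

/-- `TransR I a b` is the tangent map `T_b R_a` of right translation `R_a : g ↦ g * a`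
at the point `b`. -/
noncomputable def TransR {E : Type*} [NormedAddCommGroup E] [NormedSpace ℝ E]
    {H : Type*} [TopologicalSpace H] (I : ModelWithCorners ℝ E H)
    {G : Type*} [TopologicalSpace G] [ChartedSpace H G] [Group G]
    (a b : G) : E →L[ℝ] E :=
  mfderiv I I (fun g => g * a) b

/-- `cVel I X t` is the velocity `Ẋ(t)` of the curve `X : ℝ → G`. -/
noncomputable def cVel {E : Type*} [NormedAddCommGroup E] [NormedSpace ℝ E]
    {H : Type*} [TopologicalSpace H] (I : ModelWithCorners ℝ E H)
    {G : Type*} [TopologicalSpace G] [ChartedSpace H G]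
    (X : ℝ → G) (t : ℝ) : E :=
  mfderiv 𝓘(ℝ) I X t (1 : ℝ)

/-- The curve `X` is a (smooth, globally defined) solution of the left invariant
system `Ẋ = Xu` with input `u : ℝ → 𝔤` (the Lie algebra `𝔤 = T_eG` being
identified with the model space `E`). -/
def SolLeftInvSys {E : Type*} [NormedAddCommGroup E] [NormedSpace ℝ E]
    {H : Type*} [TopologicalSpace H] (I : ModelWithCorners ℝ E H)
    {G : Type*} [TopologicalSpace G] [ChartedSpace H G] [Group G]
    (u : ℝ → E) (X : ℝ → G) : Prop :=
  ContMDiff 𝓘(ℝ) I (⊤ : ℕ∞) X ∧ ∀ t, cVel I X t = TransL I (X t) 1 (u t)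

/-- The curve `X` is a (smooth, globally defined) solution of the right invariant
system `Ẋ = vX` with input `v : ℝ → 𝔤`. -/
def SolRightInvSys {E : Type*} [NormedAddCommGroup E] [NormedSpace ℝ E]
    {H : Type*} [TopologicalSpace H] (I : ModelWithCorners ℝ E H)
    {G : Type*} [TopologicalSpace G] [ChartedSpace H G] [Group G]
    (v : ℝ → E) (X : ℝ → G) : Prop :=
  ContMDiff 𝓘(ℝ) I (⊤ : ℕ∞) X ∧ ∀ t, cVel I X t = TransR I (X t) 1 (v t)

/-- The adjoint representation `Ad_A = T_A R_{A⁻¹} ∘ T_e L_A : 𝔤 → 𝔤`. -/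
noncomputable def AdMap {E : Type*} [NormedAddCommGroup E] [NormedSpace ℝ E]
    {H : Type*} [TopologicalSpace H] (I : ModelWithCorners ℝ E H)
    {G : Type*} [TopologicalSpace G] [ChartedSpace H G] [Group G]
    (A : G) (w : E) : E :=
  TransR I A⁻¹ A (TransL I A 1 w)

/-- The curve `X̂` is a (smooth, globally defined) solution of the second system
`X̂̇ = F(X̂, u, t)` with input `u`. -/
def SolSecondSys {E : Type*} [NormedAddCommGroup E] [NormedSpace ℝ E]
    {H : Type*} [TopologicalSpace H] (I : ModelWithCorners ℝ E H)
    {G : Type*} [TopologicalSpace G] [ChartedSpace H G]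
    (F : G → E → ℝ → E) (u : ℝ → E) (Xh : ℝ → G) : Prop :=
  ContMDiff 𝓘(ℝ) I (⊤ : ℕ∞) Xh ∧ ∀ t, cVel I Xh t = F (Xh t) (u t) t

section Aux

variable {E : Type*} [NormedAddCommGroup E] [NormedSpace ℝ E]
    {H : Type*} [TopologicalSpace H] {I : ModelWithCorners ℝ E H}
    {G : Type*} [TopologicalSpace G] [ChartedSpace H G] [Group G] [LieGroup I (⊤ : ℕ∞) G]

lemma mdiffL (a x : G) : MDifferentiableAt I I (fun g => a * g) x :=
  (contMDiff_mul_left (n := ((⊤ : ℕ∞) : WithTop ℕ∞)) (a := a)).mdifferentiable (by simp) x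

lemma mdiffR (a x : G) : MDifferentiableAt I I (fun g => g * a) x :=
  (contMDiff_mul_right (n := ((⊤ : ℕ∞) : WithTop ℕ∞)) (a := a)).mdifferentiable (by simp) x

lemma TransL_one (b : G) : TransL I (1 : G) b = ContinuousLinearMap.id ℝ E := by
  have : (fun g : G => (1 : G) * g) = id := funext fun g => one_mul g
  rw [TransL, this, mfderiv_id]; rfl

lemma LL (a b c : G) : TransL I (a * b) c = (TransL I a (b * c)).comp (TransL I b c) := by
  have h : (fun g : G => (a * b) * g) = (fun g => a * g) ∘ (fun g => b * g) :=
    funext fun g => mul_assoc a b g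
  rw [TransL, TransL, TransL, h, mfderiv_comp c (mdiffL a (b * c)) (mdiffL b c)]
  rfl

lemma RR (a b c : G) : TransR I (b * a) c = (TransR I a (c * b)).comp (TransR I b c) := by
  have h : (fun g : G => g * (b * a)) = (fun g => g * a) ∘ (fun g => g * b) :=
    funext fun g => (mul_assoc g b a).symm
  rw [TransR, TransR, TransR, h, mfderiv_comp c (mdiffR a (c * b)) (mdiffR b c)]
  rfl

lemma LR (a b c : G) :
    (TransL I a (c * b)).comp (TransR I b c) = (TransR I b (a * c)).comp (TransL I a c) := by
  have h1 : (fun g : G => a * g * b) = (fun g => a * g) ∘ (fun g => g * b) :=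
    funext fun g => mul_assoc a g b
  have h2 : (fun g : G => a * g * b) = (fun g => g * b) ∘ (fun g => a * g) := rfl
  have e1 : (TransL I a (c * b)).comp (TransR I b c)
      = mfderiv I I (fun g : G => a * g * b) c := by
        rw [TransL, TransR, h1, mfderiv_comp c (mdiffL a (c * b)) (mdiffR b c)]
        rfl
  have e2 : mfderiv I I (fun g : G => a * g * b) c = (TransR I b (a * c)).comp (TransL I a c) := by
        rw [TransR, TransL, h2, mfderiv_comp c (mdiffR b (a * c)) (mdiffL a c)]
        rfl
  exact e1.trans e2

/-- Key identity: `T L_{AC} ∘ T R_C ∘ T L_{C⁻¹} = T R_C ∘ T L_A` at appropriate points. -/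
lemma KEY (A C : G) :
    ((TransL I (A * C) 1).comp ((TransR I C C⁻¹).comp (TransL I C⁻¹ 1))) =
      (TransR I C A).comp (TransL I A 1) := by
  have h1 : (TransL I (A * C) (C⁻¹ * C)).comp (TransR I C C⁻¹)
      = (TransR I C (A * C * C⁻¹)).comp (TransL I (A * C) C⁻¹) := LR (A * C) C C⁻¹
  rw [inv_mul_cancel, mul_inv_cancel_right] at h1
  have h2 : TransL I ((A * C) * C⁻¹) 1 = (TransL I (A * C) (C⁻¹ * 1)).comp (TransL I C⁻¹ 1) :=
    LL (A * C) C⁻¹ 1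
  rw [mul_inv_cancel_right, mul_one] at h2
  rw [← ContinuousLinearMap.comp_assoc, h1, ContinuousLinearMap.comp_assoc, ← h2]

/-- Product rule for curves. -/
lemma prodRule {f g : ℝ → G} {t : ℝ} (hf : MDifferentiableAt 𝓘(ℝ) I f t)
    (hg : MDifferentiableAt 𝓘(ℝ) I g t) :
    cVel I (fun s => f s * g s) t
      = TransR I (g t) (f t) (cVel I f t) + TransL I (f t) (g t) (cVel I g t) := by
  have hm : MDifferentiableAt (I.prod I) I (fun p : G × G => p.1 * p.2) (f t, g t) :=
    (contMDiff_mul I (n := ((⊤ : ℕ∞) : WithTop ℕ∞)) (G := G)).mdifferentiable (by simp) _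
  have hpair : MDifferentiableAt 𝓘(ℝ) (I.prod I) (fun s => (f s, g s)) t := hf.prodMk hg
  have hcomp : (fun s => f s * g s) = (fun p : G × G => p.1 * p.2) ∘ (fun s => (f s, g s)) := rfl
  rw [cVel, hcomp, mfderiv_comp t hm hpair, hf.mfderiv_prod hg]
  rw [mfderiv_prod_eq_add_comp hm]
  simp only [ContinuousLinearMap.add_apply, ContinuousLinearMap.comp_apply,
    ContinuousLinearMap.coe_fst', ContinuousLinearMap.coe_snd', ContinuousLinearMap.prod_apply,
    id_eq]
  rfl

omit [Group G] [LieGroup I (⊤ : ℕ∞) G] in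
lemma cVel_const (c : G) (t : ℝ) : cVel I (fun _ => c) t = 0 := by
  rw [cVel, mfderiv_const]; rfl


lemma KEY1 (C : G) :
    (TransL I C 1).comp ((TransR I C C⁻¹).comp (TransL I C⁻¹ 1)) = TransR I C (1 : G) := by
  have h := KEY (I := I) (1 : G) C
  rwa [one_mul, TransL_one, ContinuousLinearMap.comp_id] at h

lemma M2 (a b : G) : (TransL I a b).comp (TransL I b 1) = TransL I (a * b) 1 := by
  have h := LL (I := I) a b 1
  rw [mul_one] at h; exact h.symm

lemma M1 (x h' : G) :
    (TransR I h' x⁻¹).comp ((TransL I x⁻¹ 1).comp ((TransR I x⁻¹ x).comp (TransL I x 1)))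
      = TransR I (x⁻¹ * h') (1 : G) := by
  have s1 : (TransL I x⁻¹ ((1:G) * h')).comp (TransR I h' 1)
      = (TransR I h' (x⁻¹ * 1)).comp (TransL I x⁻¹ 1) := LR x⁻¹ h' 1
  rw [one_mul, mul_one] at s1
  have s2 : TransR I (x⁻¹ * h') x = (TransR I h' (x * x⁻¹)).comp (TransR I x⁻¹ x) := RR h' x⁻¹ x
  rw [mul_inv_cancel] at s2
  have s3 : (TransL I x⁻¹ (x * (x⁻¹ * h'))).comp (TransR I (x⁻¹ * h') x)
      = (TransR I (x⁻¹ * h') (x⁻¹ * x)).comp (TransL I x⁻¹ x) := LR x⁻¹ (x⁻¹ * h') x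
  rw [mul_inv_cancel_left, inv_mul_cancel] at s3
  have s4 : (TransL I x⁻¹ x).comp (TransL I x 1) = TransL I ((1:G)) 1 := by
    have h := M2 (I := I) x⁻¹ x
    rwa [inv_mul_cancel] at h
  calc (TransR I h' x⁻¹).comp ((TransL I x⁻¹ 1).comp ((TransR I x⁻¹ x).comp (TransL I x 1)))
      = ((TransR I h' x⁻¹).comp (TransL I x⁻¹ 1)).comp ((TransR I x⁻¹ x).comp (TransL I x 1)) := by
        rw [ContinuousLinearMap.comp_assoc]
    _ = ((TransL I x⁻¹ h').comp (TransR I h' 1)).comp ((TransR I x⁻¹ x).comp (TransL I x 1)) := by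
        rw [← s1]
    _ = (TransL I x⁻¹ h').comp (((TransR I h' 1).comp (TransR I x⁻¹ x)).comp (TransL I x 1)) := by
        rw [ContinuousLinearMap.comp_assoc, ContinuousLinearMap.comp_assoc]
    _ = (TransL I x⁻¹ h').comp ((TransR I (x⁻¹ * h') x).comp (TransL I x 1)) := by rw [← s2]
    _ = ((TransL I x⁻¹ h').comp (TransR I (x⁻¹ * h') x)).comp (TransL I x 1) := by
        rw [ContinuousLinearMap.comp_assoc]
    _ = ((TransR I (x⁻¹ * h') 1).comp (TransL I x⁻¹ x)).comp (TransL I x 1) := by rw [s3]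
    _ = (TransR I (x⁻¹ * h') 1).comp ((TransL I x⁻¹ x).comp (TransL I x 1)) := by
        rw [ContinuousLinearMap.comp_assoc]
    _ = (TransR I (x⁻¹ * h') 1).comp (TransL I (1:G) 1) := by rw [s4]
    _ = TransR I (x⁻¹ * h') 1 := by rw [TransL_one, ContinuousLinearMap.comp_id]

end Aux

section Const
variable {E : Type*} [NormedAddCommGroup E] [NormedSpace ℝ E]
    {H : Type*} [TopologicalSpace H] {I : ModelWithCorners ℝ E H}
    {G : Type*} [TopologicalSpace G] [ChartedSpace H G] [Group G] [LieGroup I (⊤ : ℕ∞) G]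

lemma const_of_cVel_zero {f : ℝ → G}
    (hf : ContMDiff 𝓘(ℝ) I (⊤ : ℕ∞) f) (h0 : ∀ t, cVel I f t = 0) (t : ℝ) : f t = f 0 := by
  have hmd : ∀ s, MDifferentiableAt 𝓘(ℝ) I f s := fun s => hf.mdifferentiable (by simp) s
  have hzero : ∀ s, mfderiv 𝓘(ℝ) I f s = 0 :=
    fun s => ContinuousLinearMap.ext_ring (h0 s)
  have hloc : IsLocallyConstant f := by
    rw [IsLocallyConstant.iff_eventually_eq]
    intro t₀
    obtain ⟨r, hr, hball⟩ := Metric.isOpen_iff.1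
      ((chartAt H (f t₀)).open_source.preimage hf.continuous) t₀
      (by simpa using mem_chart_source H (f t₀))
    have hconv : Convex ℝ (Metric.ball t₀ r) := convex_ball t₀ r
    set φ : G → E := ↑(extChartAt I (f t₀)) with hφ
    have hsub : ∀ s ∈ Metric.ball t₀ r, f s ∈ (chartAt H (f t₀)).source := fun s hs => hball hs
    have hgd : ∀ s ∈ Metric.ball t₀ r, DifferentiableAt ℝ (fun x => φ (f x)) s := by
      intro s hs
      have h1 : MDifferentiableAt 𝓘(ℝ) 𝓘(ℝ, E) (fun x => φ (f x)) s :=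
        ((contMDiffAt_extChartAt' (n := ((⊤ : ℕ∞) : WithTop ℕ∞)) (hsub s hs)).mdifferentiableAt (by simp)).comp s (hmd s)
      exact mdifferentiableAt_iff_differentiableAt.1 h1
    have hg0 : ∀ s ∈ Metric.ball t₀ r,
        fderivWithin ℝ (fun x => φ (f x)) (Metric.ball t₀ r) s = 0 := by
      intro s hs
      rw [fderivWithin_of_isOpen Metric.isOpen_ball hs, ← mfderiv_eq_fderiv]
      have hc := mfderiv_comp (I' := I) s
        ((contMDiffAt_extChartAt' (n := ((⊤ : ℕ∞) : WithTop ℕ∞)) (hsub s hs)).mdifferentiableAt (by simp)) (hmd s)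
      rw [show (fun x => φ (f x)) = φ ∘ f from rfl, hc, hzero s,
        ContinuousLinearMap.comp_zero]
      rfl
    filter_upwards [Metric.ball_mem_nhds t₀ hr] with s hs
    have heq : φ (f s) = φ (f t₀) :=
      hconv.is_const_of_fderivWithin_eq_zero
        (fun x hx => (hgd x hx).differentiableWithinAt) hg0 hs (Metric.mem_ball_self hr)
    exact (extChartAt I (f t₀)).injOn (by rw [extChartAt_source]; exact hsub s hs)
      (by rw [extChartAt_source]; exact mem_chart_source H (f t₀)) heq
  exact hloc.apply_eq_of_preconnectedSpace t 0

end Const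

/- STATEMENT 3: the left invariant system `Ẋ = Xu` and the second system
`X̂̇ = F(X̂,u,t)` (whose solutions are assumed to exist through every initial
condition, for every admissible input) are left synchronous — i.e., the
canonical left invariant error `E_l(t) = X(t)⁻¹X̂(t)` is constant along every
pair of solutions, for every admissible input — if and only if along every pair
of solutions `F(X̂(t),u(t),t) = X̂(t)·Ad_{X̂(t)⁻¹X(t)} u(t)
= T_eL_{X̂(t)} (Ad_{E_l(t)⁻¹} u(t))` for all `t`. -/
theorem left_synchronous_iff_adjoint_internal_model
    {E : Type*} [NormedAddCommGroup E] [NormedSpace ℝ E] [FiniteDimensional ℝ E]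
    {H : Type*} [TopologicalSpace H] {I : ModelWithCorners ℝ E H}
    {G : Type*} [TopologicalSpace G] [ChartedSpace H G] [Group G] [LieGroup I (⊤ : ℕ∞) G]
    [ConnectedSpace G]
    (F : G → E → ℝ → E)
    (hex : ∀ u : ℝ → E, ContDiff ℝ (⊤ : ℕ∞) u → ∀ (t₀ : ℝ) (Xh₀ : G),
      ∃ Xh : ℝ → G, Xh t₀ = Xh₀ ∧ SolSecondSys I F u Xh) :
    (∀ u : ℝ → E, ContDiff ℝ (⊤ : ℕ∞) u → ∀ X Xh : ℝ → G,
        SolLeftInvSys I u X → SolSecondSys I F u Xh →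
        ∀ t, (X t)⁻¹ * Xh t = (X 0)⁻¹ * Xh 0)
    ↔ (∀ u : ℝ → E, ContDiff ℝ (⊤ : ℕ∞) u → ∀ X Xh : ℝ → G,
        SolLeftInvSys I u X → SolSecondSys I F u Xh →
        ∀ t, F (Xh t) (u t) t =
          TransL I (Xh t) 1 (AdMap I (((X t)⁻¹ * Xh t)⁻¹) (u t))) := by
  constructor
  · -- synchrony implies the internal model formula
    intro hsync u hu X Xh hX hXh t
    set C := (X 0)⁻¹ * Xh 0 with hC
    have hE : ∀ s, (X s)⁻¹ * Xh s = C := hsync u hu X Xh hX hXh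
    have hXh' : ∀ s, Xh s = X s * C := fun s => by
      rw [← hE s, mul_inv_cancel_left]
    have hXd : ∀ s, MDifferentiableAt 𝓘(ℝ) I X s := fun s => hX.1.mdifferentiable (by simp) s
    calc F (Xh t) (u t) t = cVel I (fun s => X s * C) t := by
          rw [← funext hXh']; exact (hXh.2 t).symm
      _ = TransR I C (X t) (TransL I (X t) 1 (u t)) := by
          rw [prodRule (hXd t) mdifferentiableAt_const, cVel_const, map_zero, add_zero, hX.2 t]
      _ = TransL I (Xh t) 1 (AdMap I (((X t)⁻¹ * Xh t)⁻¹) (u t)) := by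
          rw [hE t, AdMap, inv_inv, hXh' t]
          have h := congrArg (fun L : E →L[ℝ] E => L (u t)) (KEY (I := I) (X t) C)
          simpa using h.symm
  · -- the internal model formula implies synchrony
    intro hF u hu X Xh hX hXh t
    have hXd : ∀ s, MDifferentiableAt 𝓘(ℝ) I X s := fun s => hX.1.mdifferentiable (by simp) s
    have hZs : ContMDiff 𝓘(ℝ) I (⊤ : ℕ∞) (fun s => (X s)⁻¹) := hX.1.inv
    have hZd : ∀ s, MDifferentiableAt 𝓘(ℝ) I (fun s' => (X s')⁻¹) s :=
      fun s => hZs.mdifferentiable (by simp) s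
    have hXhd : ∀ s, MDifferentiableAt 𝓘(ℝ) I Xh s := fun s => hXh.1.mdifferentiable (by simp) s
    have hErs : ContMDiff 𝓘(ℝ) I (⊤ : ℕ∞) (fun s => (X s)⁻¹ * Xh s) := hZs.mul hXh.1
    have hFeq := hF u hu X Xh hX hXh
    -- velocity of the inverse curve
    have hZvel : ∀ s, cVel I (fun s' => (X s')⁻¹) s
        = - TransL I (X s)⁻¹ 1 (TransR I (X s)⁻¹ (X s) (TransL I (X s) 1 (u s))) := by
      intro s
      have hone : (fun s' => X s' * (X s')⁻¹) = fun _ => (1 : G) :=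
        funext fun s' => mul_inv_cancel (X s')
      have hpr := prodRule (I := I) (f := X) (g := fun s' => (X s')⁻¹) (hXd s) (hZd s)
      rw [hone, cVel_const] at hpr
      have hpr' : TransR I (X s)⁻¹ (X s) (cVel I X s)
          + TransL I (X s) (X s)⁻¹ (cVel I (fun s' => (X s')⁻¹) s) = 0 := hpr.symm
      have hb : TransL I (X s) (X s)⁻¹ (cVel I (fun s' => (X s')⁻¹) s)
          = - TransR I (X s)⁻¹ (X s) (cVel I X s) :=
        eq_neg_of_add_eq_zero_right hpr'
      have hid := LL (I := I) (X s)⁻¹ (X s) (X s)⁻¹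
      rw [inv_mul_cancel, mul_inv_cancel, TransL_one] at hid
      have happ := congrArg (fun L : E →L[ℝ] E => L (cVel I (fun s' => (X s')⁻¹) s)) hid
      simp only [ContinuousLinearMap.coe_id', id_eq, ContinuousLinearMap.comp_apply] at happ
      rw [happ, hb, map_neg, hX.2 s]
    -- the error has zero velocity
    have hvel0 : ∀ s, cVel I (fun s' => (X s')⁻¹ * Xh s') s = 0 := by
      intro s
      rw [prodRule (hZd s) (hXhd s), hZvel s, map_neg, hXh.2 s, hFeq s]
      have e1 : TransR I (Xh s) (X s)⁻¹
            (TransL I (X s)⁻¹ 1 (TransR I (X s)⁻¹ (X s) (TransL I (X s) 1 (u s))))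
          = TransR I ((X s)⁻¹ * Xh s) 1 (u s) := by
        have h := congrArg (fun L : E →L[ℝ] E => L (u s)) (M1 (I := I) (X s) (Xh s))
        simpa using h
      have e2 : TransL I (X s)⁻¹ (Xh s)
            (TransL I (Xh s) 1 (AdMap I (((X s)⁻¹ * Xh s)⁻¹) (u s)))
          = TransR I ((X s)⁻¹ * Xh s) 1 (u s) := by
        have hm2 := congrArg (fun L : E →L[ℝ] E => L (AdMap I (((X s)⁻¹ * Xh s)⁻¹) (u s)))
          (M2 (I := I) (X s)⁻¹ (Xh s))
        simp only [ContinuousLinearMap.comp_apply] at hm2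
        rw [hm2, AdMap, inv_inv]
        have h := congrArg (fun L : E →L[ℝ] E => L (u s)) (KEY1 (I := I) ((X s)⁻¹ * Xh s))
        simpa using h
      rw [e1, e2, neg_add_cancel]
    exact const_of_cVel_zero hErs hvel0 t
end

section
/- Let f : G × G → ℝ be a smooth bi-invariant cost function and let the Riemannian metric on G be left invariant. Let u be an admissible input, let X solve the left invariant system Ẋ = Xu, and let X̂ solve the left gradient observer X̂̇ = X̂u − grad₁ f(X̂, X). Then with E_l(t) = X(t)⁻¹X̂(t), the time derivative of the cost along the trajectories satisfies (d/dt) f(E_l(t), e) = −‖grad₁ f(E_l(t), e)‖². The analogous identity (d/dt) f(E_r(t), e) = −‖grad₁ f(E_r(t), e)‖² holds for a right invariant Riemannian metric, the right invariant system Ẋ = vX, the right gradient observer X̂̇ = vX̂ − grad₁ f(X̂, X), and E_r(t) = X̂(t)X(t)⁻¹. -/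
open scoped Manifold
open Filter Topology

/-- `dFst I f X Y η` is the differential `d₁f(X,Y)(η)` of the cost `f` with
respect to its first argument, applied to the tangent vector `η ∈ T_X G`. -/
noncomputable def dFst {E : Type*} [NormedAddCommGroup E] [NormedSpace ℝ E]
    {H : Type*} [TopologicalSpace H] (I : ModelWithCorners ℝ E H)
    {G : Type*} [TopologicalSpace G] [ChartedSpace H G]
    (f : G → G → ℝ) (X Y : G) (η : E) : ℝ :=
  mfderiv I 𝓘(ℝ) (fun Z => f Z Y) X η

/-- `m` is (pointwise) a Riemannian metric on `G`: a symmetric positive definite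
bilinear form on each tangent space (identified with the model space `E`). -/
def IsRiemMetric {E : Type*} [NormedAddCommGroup E] [NormedSpace ℝ E]
    {G : Type*} (m : G → E →ₗ[ℝ] E →ₗ[ℝ] ℝ) : Prop :=
  (∀ (x : G) (v w : E), m x v w = m x w v) ∧ (∀ (x : G) (v : E), v ≠ 0 → 0 < m x v v)

/-- The Riemannian metric `m` is left invariant: every left translation is an
isometry. -/
def LeftInvMetric {E : Type*} [NormedAddCommGroup E] [NormedSpace ℝ E]
    {H : Type*} [TopologicalSpace H] (I : ModelWithCorners ℝ E H)
    {G : Type*} [TopologicalSpace G] [ChartedSpace H G] [Group G]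
    (m : G → E →ₗ[ℝ] E →ₗ[ℝ] ℝ) : Prop :=
  ∀ (S x : G) (v w : E), m (S * x) (TransL I S x v) (TransL I S x w) = m x v w

/-- The Riemannian metric `m` is right invariant: every right translation is an
isometry. -/
def RightInvMetric {E : Type*} [NormedAddCommGroup E] [NormedSpace ℝ E]
    {H : Type*} [TopologicalSpace H] (I : ModelWithCorners ℝ E H)
    {G : Type*} [TopologicalSpace G] [ChartedSpace H G] [Group G]
    (m : G → E →ₗ[ℝ] E →ₗ[ℝ] ℝ) : Prop :=
  ∀ (S x : G) (v w : E), m (x * S) (TransR I S x v) (TransR I S x w) = m x v w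

/-- The cost `f : G × G → ℝ` is left invariant. -/
def LeftInvCost {G : Type*} [Group G] (f : G → G → ℝ) : Prop :=
  ∀ S X Y : G, f (S * X) (S * Y) = f X Y

/-- The cost `f : G × G → ℝ` is right invariant. -/
def RightInvCost {G : Type*} [Group G] (f : G → G → ℝ) : Prop :=
  ∀ S X Y : G, f (X * S) (Y * S) = f X Y

/-- `gradf X Y = grad₁ f(X,Y) ∈ T_X G` is the Riemannian gradient of the cost `f`
with respect to its first argument, characterised by
`⟨grad₁ f(X,Y), η⟩ = d₁f(X,Y)(η)` for all `η ∈ T_X G`. -/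
def IsGradFst {E : Type*} [NormedAddCommGroup E] [NormedSpace ℝ E]
    {H : Type*} [TopologicalSpace H] (I : ModelWithCorners ℝ E H)
    {G : Type*} [TopologicalSpace G] [ChartedSpace H G]
    (m : G → E →ₗ[ℝ] E →ₗ[ℝ] ℝ) (f : G → G → ℝ) (gradf : G → G → E) : Prop :=
  ∀ (X Y : G) (η : E), m X (gradf X Y) η = dFst I f X Y η

/-- The curve `X̂` is a (smooth, globally defined) solution of the left gradient
observer `X̂̇ = X̂u − grad₁ f(X̂, X)` (with exact measurements `Y = X`, `w = u`). -/
def SolLeftGradObs {E : Type*} [NormedAddCommGroup E] [NormedSpace ℝ E]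
    {H : Type*} [TopologicalSpace H] (I : ModelWithCorners ℝ E H)
    {G : Type*} [TopologicalSpace G] [ChartedSpace H G] [Group G]
    (gradf : G → G → E) (u : ℝ → E) (X Xh : ℝ → G) : Prop :=
  ContMDiff 𝓘(ℝ) I (⊤ : ℕ∞) Xh ∧
    ∀ t, cVel I Xh t = TransL I (Xh t) 1 (u t) - gradf (Xh t) (X t)

/-- The curve `X̂` is a (smooth, globally defined) solution of the right gradient
observer `X̂̇ = vX̂ − grad₁ f(X̂, X)` (with exact measurements `Y = X`, `w = v`). -/
def SolRightGradObs {E : Type*} [NormedAddCommGroup E] [NormedSpace ℝ E]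
    {H : Type*} [TopologicalSpace H] (I : ModelWithCorners ℝ E H)
    {G : Type*} [TopologicalSpace G] [ChartedSpace H G] [Group G]
    (gradf : G → G → E) (v : ℝ → E) (X Xh : ℝ → G) : Prop :=
  ContMDiff 𝓘(ℝ) I (⊤ : ℕ∞) Xh ∧
    ∀ t, cVel I Xh t = TransR I (Xh t) 1 (v t) - gradf (Xh t) (X t)

/-- auxiliary: differential of the cost in its second argument. -/
noncomputable def dSnd {E : Type*} [NormedAddCommGroup E] [NormedSpace ℝ E]
    {H : Type*} [TopologicalSpace H] (I : ModelWithCorners ℝ E H)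
    {G : Type*} [TopologicalSpace G] [ChartedSpace H G]
    (f : G → G → ℝ) (X Y : G) (η : E) : ℝ :=
  mfderiv I 𝓘(ℝ) (fun Z => f X Z) Y η

section Aux

variable {E : Type*} [NormedAddCommGroup E] [NormedSpace ℝ E]
    {H : Type*} [TopologicalSpace H] {I : ModelWithCorners ℝ E H}
    {G : Type*} [TopologicalSpace G] [ChartedSpace H G] [Group G] [LieGroup I (⊤ : ℕ∞) G]

lemma transL_transL (a b : G) (η : E) :
    TransL I a b (TransL I a⁻¹ (a * b) η) = η := by
  have h1 : MDifferentiableAt I I (fun g : G => a * g) (a⁻¹ * (a * b)) :=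
    (contMDiff_mul_left (a := a) (n := (⊤ : ℕ∞))).mdifferentiableAt (by simp)
  have h2 : MDifferentiableAt I I (fun g : G => a⁻¹ * g) (a * b) :=
    (contMDiff_mul_left (a := a⁻¹) (n := (⊤ : ℕ∞))).mdifferentiableAt (by simp)
  have hc := mfderiv_comp (I' := I) (a * b) h1 h2
  have hid : ((fun g : G => a * g) ∘ fun g : G => a⁻¹ * g) = id := by
    funext g; simp
  rw [hid, mfderiv_id] at hc
  have h3 : TransL I a (a⁻¹ * (a * b)) (TransL I a⁻¹ (a * b) η) = η := by
    have := congrArg (fun (L : E →L[ℝ] E) => L η) hc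
    exact this.symm
  simpa [inv_mul_cancel_left] using h3

lemma transR_transR (a b : G) (η : E) :
    TransR I a b (TransR I a⁻¹ (b * a) η) = η := by
  have h1 : MDifferentiableAt I I (fun g : G => g * a) (b * a * a⁻¹) :=
    (contMDiff_mul_right (a := a) (n := (⊤ : ℕ∞))).mdifferentiableAt (by simp)
  have h2 : MDifferentiableAt I I (fun g : G => g * a⁻¹) (b * a) :=
    (contMDiff_mul_right (a := a⁻¹) (n := (⊤ : ℕ∞))).mdifferentiableAt (by simp)
  have hc := mfderiv_comp (I' := I) (b * a) h1 h2
  have hid : ((fun g : G => g * a) ∘ fun g : G => g * a⁻¹) = id := by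
    funext g; simp
  rw [hid, mfderiv_id] at hc
  have h3 : TransR I a (b * a * a⁻¹) (TransR I a⁻¹ (b * a) η) = η := by
    have := congrArg (fun (L : E →L[ℝ] E) => L η) hc
    exact this.symm
  simpa [mul_inv_cancel_right] using h3

variable {f : G → G → ℝ}

/-- `Z ↦ f Z Y` is smooth. -/
lemma costSmoothFst (hf : ContMDiff (I.prod I) 𝓘(ℝ) (⊤ : ℕ∞) (fun p : G × G => f p.1 p.2))
    (Y : G) : ContMDiff I 𝓘(ℝ) (⊤ : ℕ∞) (fun Z => f Z Y) :=
  hf.comp (contMDiff_id.prodMk contMDiff_const)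

lemma costSmoothSnd (hf : ContMDiff (I.prod I) 𝓘(ℝ) (⊤ : ℕ∞) (fun p : G × G => f p.1 p.2))
    (X : G) : ContMDiff I 𝓘(ℝ) (⊤ : ℕ∞) (fun Z => f X Z) :=
  hf.comp (contMDiff_const.prodMk contMDiff_id)

variable (hf : ContMDiff (I.prod I) 𝓘(ℝ) (⊤ : ℕ∞) (fun p : G × G => f p.1 p.2))

include hf

/-- chain rule for `d₁ f` under left translation, for left invariant cost. -/
lemma dFst_transL (hfl : LeftInvCost f) (S X Y : G) (ξ : E) :
    dFst I f (S * X) (S * Y) (TransL I S X ξ) = dFst I f X Y ξ := by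
  have key : (fun Z => f Z Y) = (fun Z => f Z (S * Y)) ∘ (fun Z : G => S * Z) := by
    funext Z; exact (hfl S Z Y).symm
  have hc := mfderiv_comp (I' := I) X
    ((costSmoothFst hf (S * Y)).mdifferentiableAt (by simp))
    ((contMDiff_mul_left (a := S) (n := (⊤ : ℕ∞))).mdifferentiableAt (by simp))
  rw [← key] at hc
  have := congrArg (fun (L : E →L[ℝ] ℝ) => L ξ) hc
  exact this.symm

lemma dFst_transR (hfr : RightInvCost f) (S X Y : G) (ξ : E) :
    dFst I f (X * S) (Y * S) (TransR I S X ξ) = dFst I f X Y ξ := by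
  have key : (fun Z => f Z Y) = (fun Z => f Z (Y * S)) ∘ (fun Z : G => Z * S) := by
    funext Z; exact (hfr S Z Y).symm
  have hc := mfderiv_comp (I' := I) X
    ((costSmoothFst hf (Y * S)).mdifferentiableAt (by simp))
    ((contMDiff_mul_right (a := S) (n := (⊤ : ℕ∞))).mdifferentiableAt (by simp))
  rw [← key] at hc
  have := congrArg (fun (L : E →L[ℝ] ℝ) => L ξ) hc
  exact this.symm

omit hf in
/-- nondegeneracy of the Riemannian metric. -/
lemma metric_inj {m : G → E →ₗ[ℝ] E →ₗ[ℝ] ℝ} (hm : IsRiemMetric m) {x : G} {v w : E}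
    (h : ∀ η, m x v η = m x w η) : v = w := by
  by_contra hvw
  have hne : v - w ≠ 0 := sub_ne_zero.2 hvw
  have hpos := hm.2 x (v - w) hne
  have hzero : m x (v - w) (v - w) = 0 := by
    have h2 : (m x) (v - w) = m x v - m x w := map_sub _ _ _
    rw [h2, LinearMap.sub_apply, h (v - w), sub_self]
  rw [hzero] at hpos
  exact lt_irrefl 0 hpos

variable {m : G → E →ₗ[ℝ] E →ₗ[ℝ] ℝ} {gradf : G → G → E}

/-- gradient transforms by left translation. -/
lemma grad_transL (hm : IsRiemMetric m) (hml : LeftInvMetric I m)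
    (hgrad : IsGradFst I m f gradf) (hfl : LeftInvCost f) (S X Y : G) :
    gradf (S * X) (S * Y) = TransL I S X (gradf X Y) := by
  refine metric_inj hm (x := S * X) fun η => ?_
  set ξ := TransL I S⁻¹ (S * X) η with hξ
  have hη : TransL I S X ξ = η := transL_transL S X η
  calc m (S * X) (gradf (S * X) (S * Y)) η
      = dFst I f (S * X) (S * Y) η := hgrad _ _ _
    _ = dFst I f (S * X) (S * Y) (TransL I S X ξ) := by rw [hη]
    _ = dFst I f X Y ξ := dFst_transL hf hfl S X Y ξ
    _ = m X (gradf X Y) ξ := (hgrad _ _ _).symm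
    _ = m (S * X) (TransL I S X (gradf X Y)) (TransL I S X ξ) := (hml S X _ ξ).symm
    _ = m (S * X) (TransL I S X (gradf X Y)) η := by rw [hη]

lemma grad_transR (hm : IsRiemMetric m) (hmr : RightInvMetric I m)
    (hgrad : IsGradFst I m f gradf) (hfr : RightInvCost f) (S X Y : G) :
    gradf (X * S) (Y * S) = TransR I S X (gradf X Y) := by
  refine metric_inj hm (x := X * S) fun η => ?_
  have hη : TransR I S X (TransR I S⁻¹ (X * S) η) = η := transR_transR S X η
  set ξ := TransR I S⁻¹ (X * S) η with hξ
  calc m (X * S) (gradf (X * S) (Y * S)) η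
      = dFst I f (X * S) (Y * S) η := hgrad _ _ _
    _ = dFst I f (X * S) (Y * S) (TransR I S X ξ) := by rw [hη]
    _ = dFst I f X Y ξ := dFst_transR hf hfr S X Y ξ
    _ = m X (gradf X Y) ξ := (hgrad _ _ _).symm
    _ = m (X * S) (TransR I S X (gradf X Y)) (TransR I S X ξ) := (hmr S X _ ξ).symm
    _ = m (X * S) (TransR I S X (gradf X Y)) η := by rw [hη]


omit hf in
lemma sum_zero_generic
    (a b : G) (w : E) {La Lb : G → G}
    (hLa : ContMDiff I I (⊤ : ℕ∞) La) (hLb : ContMDiff I I (⊤ : ℕ∞) Lb)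
    (hLa1 : La 1 = a) (hLb1 : Lb 1 = b)
    (hconst : ∀ Z : G, f (La Z) (Lb Z) = f a b)
    (hf : ContMDiff (I.prod I) 𝓘(ℝ) (⊤ : ℕ∞) (fun p : G × G => f p.1 p.2)) :
    dFst I f a b (mfderiv I I La 1 w) +
      dSnd I f a b (mfderiv I I Lb 1 w) = 0 := by
  subst hLa1; subst hLb1
  have hφ : ContMDiff I (I.prod I) (⊤ : ℕ∞) (fun Z : G => (La Z, Lb Z)) := hLa.prodMk hLb
  have hc := mfderiv_comp (I' := I.prod I) (1 : G)
    (hf.mdifferentiableAt (by simp)) (hφ.mdifferentiableAt (by simp))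
  have hzero : mfderiv I 𝓘(ℝ)
      ((fun p : G × G => f p.1 p.2) ∘ (fun Z : G => (La Z, Lb Z))) (1 : G) = 0 := by
    have : ((fun p : G × G => f p.1 p.2) ∘ (fun Z : G => (La Z, Lb Z)))
        = fun _ : G => f (La 1) (Lb 1) := by funext Z; exact hconst Z
    rw [this]; exact mfderiv_const
  have hφd : mfderiv I (I.prod I) (fun Z : G => (La Z, Lb Z)) (1 : G) =
      (mfderiv I I La 1).prod (mfderiv I I Lb 1) :=
    (hLa.mdifferentiableAt (by simp)).mfderiv_prod (hLb.mdifferentiableAt (by simp))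
  have e1 : (0 : ℝ) = mfderiv (I.prod I) 𝓘(ℝ) (fun p : G × G => f p.1 p.2) (La 1, Lb 1)
      (mfderiv I I La 1 w, mfderiv I I Lb 1 w) := by
    have e2 : mfderiv I 𝓘(ℝ)
        ((fun p : G × G => f p.1 p.2) ∘ (fun Z : G => (La Z, Lb Z))) (1 : G) w
        = mfderiv (I.prod I) 𝓘(ℝ) (fun p : G × G => f p.1 p.2) (La 1, Lb 1)
          (mfderiv I (I.prod I) (fun Z : G => (La Z, Lb Z)) (1 : G) w) := by
      rw [hc]; rfl
    have e3 : mfderiv I (I.prod I) (fun Z : G => (La Z, Lb Z)) (1 : G) w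
        = (mfderiv I I La 1 w, mfderiv I I Lb 1 w) := by rw [hφd]; rfl
    rw [hzero] at e2; rw [e3] at e2; exact e2
  have hsplit := mfderiv_prod_eq_add_apply (I := I) (I' := I) (I'' := 𝓘(ℝ))
    (f := fun p : G × G => f p.1 p.2) (p := (La 1, Lb 1))
    (v := (mfderiv I I La 1 w, mfderiv I I Lb 1 w))
    (hf.mdifferentiableAt (by simp))
  exact (e1.trans hsplit).symm

lemma sum_zero_left (hfr : RightInvCost f) (a b : G) (w : E) :
    dFst I f a b (TransL I a 1 w) + dSnd I f a b (TransL I b 1 w) = 0 :=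
  sum_zero_generic a b w (contMDiff_mul_left (a := a) (n := (⊤ : ℕ∞))) (contMDiff_mul_left (a := b))
    (mul_one a) (mul_one b) (fun Z => hfr Z a b) hf

lemma sum_zero_right (hfl : LeftInvCost f) (a b : G) (w : E) :
    dFst I f a b (TransR I a 1 w) + dSnd I f a b (TransR I b 1 w) = 0 :=
  sum_zero_generic a b w (contMDiff_mul_right (a := a) (n := (⊤ : ℕ∞))) (contMDiff_mul_right (a := b))
    (one_mul a) (one_mul b) (fun Z => hfl Z a b) hf

/-- derivative of the cost along a pair of smooth curves. -/
lemma hasDerivAt_cost {X Xh : ℝ → G} (hX : ContMDiff 𝓘(ℝ) I (⊤ : ℕ∞) X)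
    (hXh : ContMDiff 𝓘(ℝ) I (⊤ : ℕ∞) Xh) (t : ℝ) :
    HasDerivAt (fun s => f (Xh s) (X s))
      (dFst I f (Xh t) (X t) (cVel I Xh t) +
        dSnd I f (Xh t) (X t) (cVel I X t)) t := by
  have hψ : ContMDiff 𝓘(ℝ) (I.prod I) (⊤ : ℕ∞) (fun s : ℝ => (Xh s, X s)) := hXh.prodMk hX
  have hg : ContMDiff 𝓘(ℝ) 𝓘(ℝ) (⊤ : ℕ∞)
      ((fun p : G × G => f p.1 p.2) ∘ (fun s : ℝ => (Xh s, X s))) := hf.comp hψ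
  have hd : HasDerivAt ((fun p : G × G => f p.1 p.2) ∘ (fun s : ℝ => (Xh s, X s)))
      (mfderiv 𝓘(ℝ) 𝓘(ℝ) ((fun p : G × G => f p.1 p.2) ∘ (fun s : ℝ => (Xh s, X s))) t
        ((1:ℝ))) t :=
    by
      have h3 : HasFDerivAt _ (_ : ℝ →L[ℝ] ℝ) t :=
        ((hg.mdifferentiableAt (x := t) (by simp)).hasMFDerivAt).hasFDerivAt
      exact h3.hasDerivAt
  have hc := mfderiv_comp (I' := I.prod I) t
    (hf.mdifferentiableAt (by simp)) (hψ.mdifferentiableAt (by simp))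
  have hψd : mfderiv 𝓘(ℝ) (I.prod I) (fun s : ℝ => (Xh s, X s)) t =
      (mfderiv 𝓘(ℝ) I Xh t).prod (mfderiv 𝓘(ℝ) I X t) :=
    (hXh.mdifferentiableAt (by simp)).mfderiv_prod (hX.mdifferentiableAt (by simp))
  have hsplit := mfderiv_prod_eq_add_apply (I := I) (I' := I) (I'' := 𝓘(ℝ))
    (f := fun p : G × G => f p.1 p.2) (p := (Xh t, X t))
    (v := (cVel I Xh t, cVel I X t))
    (hf.mdifferentiableAt (by simp))
  have hval : mfderiv 𝓘(ℝ) 𝓘(ℝ)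
      ((fun p : G × G => f p.1 p.2) ∘ (fun s : ℝ => (Xh s, X s))) t ((1:ℝ)) =
      dFst I f (Xh t) (X t) (cVel I Xh t) +
        dSnd I f (Xh t) (X t) (cVel I X t) := by
    have e2 : mfderiv 𝓘(ℝ) 𝓘(ℝ)
        ((fun p : G × G => f p.1 p.2) ∘ (fun s : ℝ => (Xh s, X s))) t ((1:ℝ))
        = mfderiv (I.prod I) 𝓘(ℝ) (fun p : G × G => f p.1 p.2) (Xh t, X t)
          (mfderiv 𝓘(ℝ) (I.prod I) (fun s : ℝ => (Xh s, X s)) t ((1:ℝ))) := by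
      rw [hc]; rfl
    have e3 : mfderiv 𝓘(ℝ) (I.prod I) (fun s : ℝ => (Xh s, X s)) t ((1:ℝ))
        = (cVel I Xh t, cVel I X t) := by rw [hψd]; rfl
    rw [e2, e3]
    exact hsplit
  rw [← hval]
  exact hd

end Aux

/- STATEMENT 11: for a bi-invariant cost `f` and a left invariant Riemannian
metric, along solutions of the left invariant system `Ẋ = Xu` and of the left
gradient observer `X̂̇ = X̂u − grad₁ f(X̂, X)`, the cost decays along the
canonical left invariant error `E_l(t) = X(t)⁻¹X̂(t)` as
`(d/dt) f(E_l(t), e) = −‖grad₁ f(E_l(t), e)‖²`.  The analogous identity holds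
for a right invariant metric, the right invariant system `Ẋ = vX`, the right
gradient observer and the canonical right invariant error `E_r(t) = X̂(t)X(t)⁻¹`. -/
theorem biinvariant_cost_decay_along_observer
    {E : Type*} [NormedAddCommGroup E] [NormedSpace ℝ E] [FiniteDimensional ℝ E]
    {H : Type*} [TopologicalSpace H] {I : ModelWithCorners ℝ E H}
    {G : Type*} [TopologicalSpace G] [ChartedSpace H G] [Group G] [LieGroup I (⊤ : ℕ∞) G]
    [ConnectedSpace G]
    (f : G → G → ℝ) (hf : ContMDiff (I.prod I) 𝓘(ℝ) (⊤ : ℕ∞) (fun p : G × G => f p.1 p.2))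
    (hfl : LeftInvCost f) (hfr : RightInvCost f)
    (m : G → E →ₗ[ℝ] E →ₗ[ℝ] ℝ) (hm : IsRiemMetric m)
    (gradf : G → G → E) (hgrad : IsGradFst I m f gradf) :
    ((LeftInvMetric I m →
      ∀ u : ℝ → E, ContDiff ℝ (⊤ : ℕ∞) u → ∀ X Xh : ℝ → G,
        SolLeftInvSys I u X → SolLeftGradObs I gradf u X Xh →
        ∀ t, HasDerivAt (fun s => f ((X s)⁻¹ * Xh s) 1)
          (-(m ((X t)⁻¹ * Xh t) (gradf ((X t)⁻¹ * Xh t) 1) (gradf ((X t)⁻¹ * Xh t) 1))) t))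
    ∧
    ((RightInvMetric I m →
      ∀ v : ℝ → E, ContDiff ℝ (⊤ : ℕ∞) v → ∀ X Xh : ℝ → G,
        SolRightInvSys I v X → SolRightGradObs I gradf v X Xh →
        ∀ t, HasDerivAt (fun s => f (Xh s * (X s)⁻¹) 1)
          (-(m (Xh t * (X t)⁻¹) (gradf (Xh t * (X t)⁻¹) 1) (gradf (Xh t * (X t)⁻¹) 1))) t)) := by
  constructor
  · intro hml u _hu X Xh hX hXh t
    obtain ⟨hXs, hXv⟩ := hX
    obtain ⟨hXhs, hXhv⟩ := hXh
    have hfun : (fun s => f ((X s)⁻¹ * Xh s) 1) = fun s => f (Xh s) (X s) := by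
      funext s
      simpa using (hfl (X s) ((X s)⁻¹ * Xh s) 1).symm
    have hD := hasDerivAt_cost hf hXs hXhs t
    have hg1 : gradf (Xh t) (X t) =
        TransL I (X t) ((X t)⁻¹ * Xh t) (gradf ((X t)⁻¹ * Xh t) 1) := by
      have h := grad_transL hf hm hml hgrad hfl (X t) ((X t)⁻¹ * Xh t) 1
      simpa [mul_inv_cancel_left] using h
    have hmEq : m (Xh t) (gradf (Xh t) (X t)) (gradf (Xh t) (X t)) =
        m ((X t)⁻¹ * Xh t) (gradf ((X t)⁻¹ * Xh t) 1) (gradf ((X t)⁻¹ * Xh t) 1) := by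
      rw [hg1]
      have h := hml (X t) ((X t)⁻¹ * Xh t) (gradf ((X t)⁻¹ * Xh t) 1)
        (gradf ((X t)⁻¹ * Xh t) 1)
      simpa [mul_inv_cancel_left] using h
    have hgradval : dFst I f (Xh t) (X t) (gradf (Xh t) (X t)) =
        m ((X t)⁻¹ * Xh t) (gradf ((X t)⁻¹ * Xh t) 1) (gradf ((X t)⁻¹ * Xh t) 1) :=
      (hgrad (Xh t) (X t) (gradf (Xh t) (X t))).symm.trans hmEq
    have h0 := sum_zero_left hf hfr (Xh t) (X t) (u t)
    have hval : dFst I f (Xh t) (X t) (cVel I Xh t) +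
        dSnd I f (Xh t) (X t) (cVel I X t) =
        -(m ((X t)⁻¹ * Xh t) (gradf ((X t)⁻¹ * Xh t) 1) (gradf ((X t)⁻¹ * Xh t) 1)) := by
      rw [hXhv t, hXv t]
      have hsub : dFst I f (Xh t) (X t) (TransL I (Xh t) 1 (u t) - gradf (Xh t) (X t)) =
          dFst I f (Xh t) (X t) (TransL I (Xh t) 1 (u t)) -
            dFst I f (Xh t) (X t) (gradf (Xh t) (X t)) := by
        simp only [dFst]; exact ContinuousLinearMap.map_sub _ _ _
      rw [hsub, hgradval]
      linarith
    rw [hfun, ← hval]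
    exact hD
  · intro hmr v _hv X Xh hX hXh t
    obtain ⟨hXs, hXv⟩ := hX
    obtain ⟨hXhs, hXhv⟩ := hXh
    have hfun : (fun s => f (Xh s * (X s)⁻¹) 1) = fun s => f (Xh s) (X s) := by
      funext s
      simpa using (hfr (X s) (Xh s * (X s)⁻¹) 1).symm
    have hD := hasDerivAt_cost hf hXs hXhs t
    have hg1 : gradf (Xh t) (X t) =
        TransR I (X t) (Xh t * (X t)⁻¹) (gradf (Xh t * (X t)⁻¹) 1) := by
      have h := grad_transR hf hm hmr hgrad hfr (X t) (Xh t * (X t)⁻¹) 1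
      simpa [inv_mul_cancel_right] using h
    have hmEq : m (Xh t) (gradf (Xh t) (X t)) (gradf (Xh t) (X t)) =
        m (Xh t * (X t)⁻¹) (gradf (Xh t * (X t)⁻¹) 1) (gradf (Xh t * (X t)⁻¹) 1) := by
      rw [hg1]
      have h := hmr (X t) (Xh t * (X t)⁻¹) (gradf (Xh t * (X t)⁻¹) 1)
        (gradf (Xh t * (X t)⁻¹) 1)
      simpa [inv_mul_cancel_right] using h
    have hgradval : dFst I f (Xh t) (X t) (gradf (Xh t) (X t)) =
        m (Xh t * (X t)⁻¹) (gradf (Xh t * (X t)⁻¹) 1) (gradf (Xh t * (X t)⁻¹) 1) :=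
      (hgrad (Xh t) (X t) (gradf (Xh t) (X t))).symm.trans hmEq
    have h0 := sum_zero_right hf hfl (Xh t) (X t) (v t)
    have hval : dFst I f (Xh t) (X t) (cVel I Xh t) +
        dSnd I f (Xh t) (X t) (cVel I X t) =
        -(m (Xh t * (X t)⁻¹) (gradf (Xh t * (X t)⁻¹) 1) (gradf (Xh t * (X t)⁻¹) 1)) := by
      rw [hXhv t, hXv t]
      have hsub : dFst I f (Xh t) (X t) (TransR I (Xh t) 1 (v t) - gradf (Xh t) (X t)) =
          dFst I f (Xh t) (X t) (TransR I (Xh t) 1 (v t)) -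
            dFst I f (Xh t) (X t) (gradf (Xh t) (X t)) := by
        simp only [dFst]; exact ContinuousLinearMap.map_sub _ _ _
      rw [hsub, hgradval]
      linarith
    rw [hfun, ← hval]
    exact hD
end

section
/- Let Ω : ℝ → so(3) be smooth and k > 0. Let R, R̂ : ℝ → SO(3) be smooth curves satisfying the attitude kinematics Ṙ(t) = R(t)Ω(t) and the passive attitude observer equation R̂̇(t) = R̂(t)Ω(t) + k R̂(t) ℙ(R̂(t)ᵀR(t)). Then the right invariant error E(t) = R̂(t)R(t)ᵀ satisfies the autonomous matrix differential equation Ė = k E ℙ(Eᵀ) = (k/2)(I − E²). -/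
open Matrix

/-- The orthogonal projection `ℙ(Z) = (Z − Zᵀ)/2` of `ℝ^{3×3}` onto the
skew-symmetric matrices. -/
noncomputable def skewProj (Z : Matrix (Fin 3) (Fin 3) ℝ) : Matrix (Fin 3) (Fin 3) ℝ :=
  (1 / 2 : ℝ) • (Z - Zᵀ)

/-- `R` belongs to `SO(3)`: a real orthogonal `3×3` matrix of determinant `1`. -/
def IsSO3 (R : Matrix (Fin 3) (Fin 3) ℝ) : Prop :=
  Rᵀ * R = 1 ∧ R.det = 1

lemma key_alg (k : ℝ) (A B W : Matrix (Fin 3) (Fin 3) ℝ)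
    (hA : A * Aᵀ = 1) (hB : B * Bᵀ = 1) (hBo : Bᵀ * B = 1) (hW : Wᵀ = -W) :
    (A * W + k • (A * skewProj (Aᵀ * B))) * Bᵀ + A * (B * W)ᵀ
      = k • ((A * Bᵀ) * skewProj ((A * Bᵀ)ᵀ)) := by
  have e1 : A * (Aᵀ * B) * Bᵀ = 1 := by
    calc A * (Aᵀ * B) * Bᵀ = (A * Aᵀ) * (B * Bᵀ) := by noncomm_ring
    _ = 1 := by rw [hA, hB, Matrix.one_mul]
  have e2 : A * Bᵀ * (B * Aᵀ) = 1 := by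
    calc A * Bᵀ * (B * Aᵀ) = A * (Bᵀ * B) * Aᵀ := by noncomm_ring
    _ = 1 := by rw [hBo, Matrix.mul_one, hA]
  have e3 : A * (Bᵀ * A) * Bᵀ = A * Bᵀ * (A * Bᵀ) := by noncomm_ring
  simp only [skewProj, transpose_mul, transpose_transpose, hW, Matrix.mul_smul,
    Matrix.smul_mul, Matrix.mul_sub, Matrix.sub_mul, Matrix.add_mul, Matrix.mul_neg,
    Matrix.neg_mul]
  rw [e1, e2, e3, Matrix.mul_assoc A W Bᵀ]
  abel

/- STATEMENT 18: if `Ṙ = RΩ` (attitude kinematics) and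
`R̂̇ = R̂Ω + kR̂ℙ(R̂ᵀR)` (passive attitude observer), with `Ω(t)` skew-symmetric
and `R(t), R̂(t) ∈ SO(3)` smooth, then the right invariant error
`E(t) = R̂(t)R(t)ᵀ` satisfies `Ė = kEℙ(Eᵀ) = (k/2)(I − E²)`.
Derivatives of matrix-valued curves are taken entrywise. -/
theorem so3_passive_observer_error_dynamics (k : ℝ) (hk : 0 < k)
    (Ω R Rh : ℝ → Matrix (Fin 3) (Fin 3) ℝ)
    (hΩskew : ∀ t, (Ω t)ᵀ = -(Ω t))
    (hΩsmooth : ∀ i j, ContDiff ℝ (⊤ : ℕ∞) fun t => Ω t i j)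
    (hRSO : ∀ t, IsSO3 (R t)) (hRhSO : ∀ t, IsSO3 (Rh t))
    (hRsmooth : ∀ i j, ContDiff ℝ (⊤ : ℕ∞) fun t => R t i j)
    (hRhsmooth : ∀ i j, ContDiff ℝ (⊤ : ℕ∞) fun t => Rh t i j)
    (hRode : ∀ t i j, HasDerivAt (fun s => R s i j) ((R t * Ω t) i j) t)
    (hRhode : ∀ t i j, HasDerivAt (fun s => Rh s i j)
      ((Rh t * Ω t + k • (Rh t * skewProj ((Rh t)ᵀ * R t))) i j) t) :
    ∀ t, (∀ i j, HasDerivAt (fun s => (Rh s * (R s)ᵀ) i j)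
        ((k • ((Rh t * (R t)ᵀ) * skewProj ((Rh t * (R t)ᵀ)ᵀ))) i j) t) ∧
      k • ((Rh t * (R t)ᵀ) * skewProj ((Rh t * (R t)ᵀ)ᵀ)) =
        (k / 2) • ((1 : Matrix (Fin 3) (Fin 3) ℝ) - (Rh t * (R t)ᵀ) * (Rh t * (R t)ᵀ)) := by
  intro t
  have hA : Rh t * (Rh t)ᵀ = 1 := mul_eq_one_comm.mp (hRhSO t).1
  have hB : R t * (R t)ᵀ = 1 := mul_eq_one_comm.mp (hRSO t).1
  have hBo : (R t)ᵀ * R t = 1 := (hRSO t).1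
  have halg := key_alg k (Rh t) (R t) (Ω t) hA hB hBo (hΩskew t)
  constructor
  · intro i j
    have hd : HasDerivAt (fun s => ∑ l, Rh s i l * R s j l)
        (∑ l, ((Rh t * Ω t + k • (Rh t * skewProj ((Rh t)ᵀ * R t))) i l * R t j l
          + Rh t i l * (R t * Ω t) j l)) t :=
      HasDerivAt.fun_sum (fun l _ => (hRhode t i l).fun_mul (hRode t j l))
    have hfun : (fun s => (Rh s * (R s)ᵀ) i j) = fun s => ∑ l, Rh s i l * R s j l := by
      funext s; simp [Matrix.mul_apply]
    have hval : (∑ l, ((Rh t * Ω t + k • (Rh t * skewProj ((Rh t)ᵀ * R t))) i l * R t j l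
          + Rh t i l * (R t * Ω t) j l))
        = ((Rh t * Ω t + k • (Rh t * skewProj ((Rh t)ᵀ * R t))) * (R t)ᵀ
            + Rh t * (R t * Ω t)ᵀ) i j := by
      simp [Matrix.mul_apply, Matrix.add_apply, Finset.sum_add_distrib, mul_comm]
    rw [hfun, show (k • ((Rh t * (R t)ᵀ) * skewProj ((Rh t * (R t)ᵀ)ᵀ))) i j
        = ((Rh t * Ω t + k • (Rh t * skewProj ((Rh t)ᵀ * R t))) * (R t)ᵀ
            + Rh t * (R t * Ω t)ᵀ) i j by rw [halg]]
    rw [← hval]; exact hd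
  · have hE : (Rh t * (R t)ᵀ) * (Rh t * (R t)ᵀ)ᵀ = 1 := by
      rw [transpose_mul, transpose_transpose,
        show Rh t * (R t)ᵀ * (R t * (Rh t)ᵀ) = Rh t * ((R t)ᵀ * R t) * (Rh t)ᵀ by noncomm_ring,
        hBo, Matrix.mul_one, hA]
    rw [skewProj, Matrix.mul_smul, Matrix.mul_sub, transpose_transpose, hE,
      smul_smul, smul_sub, smul_sub]
    ring_nf
end
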